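/- Let ε_3 = (1/2)∏_{j=1}^m X_j(X_j−1)(X_j−2) − (3/2)(∏_{j=1}^m X_j)(∏_{j=1}^m X_j(X_j−1)) + (∏_{j=1}^m X_j)³. Then E[ε_3] = (1/2)p_1³ − (3/2)p_1² ∏_{j=1}^m(2+μ_j) + p_1 ∏_{j=1}^m(1+3μ_j+μ_j²). -/

import Mathlib

/-!
Independence factors the expectation of each product `∏ j, f (X j)` into `∏ j, E f (X j)`.
In falling factorials `X^(k)`, the three factors are `X^(3)`, `X²(X - 1) = X^(3) + 2 X^(2)` and
`X³ = X^(3) + 3 X^(2) + X^(1)`, and the Poisson factorial moments `E X^(k) = μ^k` turn them into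
`μ³`, `μ²(2 + μ)` and `μ(1 + 3μ + μ²)`.
-/

open MeasureTheory ProbabilityTheory Finset
open scoped NNReal

/-- The law of `m` independent Poisson random variables `X_j ~ Poisson (μ j)`,
as a product measure on `Fin m → ℕ`. -/
noncomputable def poissonPi {m : ℕ} (μ : Fin m → ℝ≥0) : Measure (Fin m → ℕ) :=
  Measure.pi fun j => poissonMeasure (μ j)

open Real
open scoped Nat

namespace Nat

theorem cast_descFactorial_three {S : Type*} [Ring S] (a : ℕ) :
    (a.descFactorial 3 : S) = a * (a - 1) * (a - 2) := by
  rw [← descPochhammer_eval_eq_descFactorial]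
  simp [descPochhammer_succ_eval]

variable {S : Type*} [CommRing S] (a : ℕ)

theorem cast_sq_mul_sub_one_eq_descFactorial :
    (a : S) ^ 2 * (a - 1) = a.descFactorial 3 + 2 * a.descFactorial 2 := by
  rw [cast_descFactorial_three, cast_descFactorial_two]
  ring

theorem cast_pow_three_eq_descFactorial :
    (a : S) ^ 3 = a.descFactorial 3 + 3 * a.descFactorial 2 + a.descFactorial 1 := by
  rw [cast_descFactorial_three, cast_descFactorial_two, descFactorial_one]
  ring

end Nat

namespace ProbabilityTheory

variable (r : ℝ≥0)

theorem hasSum_descFactorial_poissonMeasure (k : ℕ) :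
    HasSum (fun n ↦ exp (-r) * r ^ n / n ! * (n.descFactorial k : ℝ)) (r ^ k) := by
  -- the terms with `n < k` vanish, and the shifted series is `r ^ k` times the Poisson series
  rw [← hasSum_nat_add_iff' k, sum_eq_zero fun n hn ↦ by
    rw [Nat.descFactorial_of_lt (mem_range.mp hn), Nat.cast_zero, mul_zero], sub_zero]
  have hshifted := (hasSum_one_poissonMeasure r).mul_left ((r : ℝ) ^ k)
  rw [mul_one] at hshifted
  refine hshifted.congr_fun fun n ↦ ?_
  have hfactorial : ((n + k)! : ℝ) = n ! * (n + k).descFactorial k := by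
    rw [Nat.add_descFactorial_eq_ascFactorial, ← Nat.factorial_mul_ascFactorial, Nat.cast_mul]
  rw [hfactorial]
  field_simp
  ring

@[fun_prop]
theorem integrable_descFactorial_poissonMeasure (k : ℕ) :
    Integrable (fun n : ℕ ↦ (n.descFactorial k : ℝ)) (poissonMeasure r) := by
  simpa [integrable_poissonMeasure_iff] using (hasSum_descFactorial_poissonMeasure r k).summable

theorem integral_descFactorial_poissonMeasure (k : ℕ) :
    ∫ n, (n.descFactorial k : ℝ) ∂poissonMeasure r = r ^ k := by
  simpa [integral_poissonMeasure] using (hasSum_descFactorial_poissonMeasure r k).tsum_eq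

theorem integrable_sq_mul_sub_one_poissonMeasure :
    Integrable (fun n : ℕ ↦ (n : ℝ) ^ 2 * (n - 1)) (poissonMeasure r) := by
  simp_rw [Nat.cast_sq_mul_sub_one_eq_descFactorial]
  fun_prop

theorem integral_sq_mul_sub_one_poissonMeasure :
    ∫ n, (n : ℝ) ^ 2 * (n - 1) ∂poissonMeasure r = (r : ℝ) ^ 2 * (2 + r) := by
  simp_rw [Nat.cast_sq_mul_sub_one_eq_descFactorial]
  rw [integral_add (by fun_prop) (by fun_prop), integral_const_mul,
    integral_descFactorial_poissonMeasure, integral_descFactorial_poissonMeasure]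
  ring

theorem integrable_pow_three_poissonMeasure :
    Integrable (fun n : ℕ ↦ (n : ℝ) ^ 3) (poissonMeasure r) := by
  simp_rw [Nat.cast_pow_three_eq_descFactorial]
  fun_prop

theorem integral_pow_three_poissonMeasure :
    ∫ n, (n : ℝ) ^ 3 ∂poissonMeasure r = (r : ℝ) * (1 + 3 * r + r ^ 2) := by
  simp_rw [Nat.cast_pow_three_eq_descFactorial]
  rw [integral_add (by fun_prop) (by fun_prop), integral_add (by fun_prop) (by fun_prop),
    integral_const_mul, integral_descFactorial_poissonMeasure,
    integral_descFactorial_poissonMeasure, integral_descFactorial_poissonMeasure]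
  ring

end ProbabilityTheory

theorem integral_prod_poissonPi {m : ℕ} (μ : Fin m → ℝ≥0) (f : ℕ → ℝ) :
    ∫ x, ∏ j, f (x j) ∂poissonPi μ = ∏ j, ∫ n, f n ∂poissonMeasure (μ j) :=
  integral_fintype_prod_eq_prod fun _ ↦ f

theorem integrable_prod_poissonPi {m : ℕ} (μ : Fin m → ℝ≥0) {f : ℕ → ℝ}
    (hf : ∀ r, Integrable f (poissonMeasure r)) :
    Integrable (fun x ↦ ∏ j, f (x j)) (poissonPi μ) :=
  Integrable.fintype_prod fun j ↦ hf (μ j)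

theorem expectation_eps3_general (m : ℕ) (μ : Fin m → ℝ≥0) :
    ∫ x : Fin m → ℕ, ((1/2 : ℝ) * ∏ j, ((x j : ℝ) * ((x j : ℝ) - 1) * ((x j : ℝ) - 2)) - (3/2 : ℝ) * (∏ j, (x j : ℝ)) * (∏ j, ((x j : ℝ) * ((x j : ℝ) - 1))) + (∏ j, (x j : ℝ)) ^ 3) ∂(poissonPi μ)
      = (1/2 : ℝ) * (∏ j, (μ j : ℝ)) ^ 3 - (3/2 : ℝ) * (∏ j, (μ j : ℝ)) ^ 2 * ∏ j, (2 + (μ j : ℝ)) + (∏ j, (μ j : ℝ)) * ∏ j, (1 + 3 * (μ j : ℝ) + (μ j : ℝ) ^ 2) := by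
  have hprod (x : Fin m → ℕ) :
      (1/2 : ℝ) * ∏ j, ((x j : ℝ) * ((x j : ℝ) - 1) * ((x j : ℝ) - 2))
          - (3/2 : ℝ) * (∏ j, (x j : ℝ)) * (∏ j, ((x j : ℝ) * ((x j : ℝ) - 1)))
          + (∏ j, (x j : ℝ)) ^ 3
        = 1/2 * ∏ j, ((x j).descFactorial 3 : ℝ) - 3/2 * ∏ j, ((x j : ℝ) ^ 2 * (x j - 1))
          + ∏ j, (x j : ℝ) ^ 3 := by
    rw [mul_assoc, ← prod_mul_distrib, ← prod_pow]
    simp only [Nat.cast_descFactorial_three, sq, mul_assoc]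
  have hint₃ := integrable_prod_poissonPi μ (integrable_descFactorial_poissonMeasure · 3)
  have hint_sq_mul := integrable_prod_poissonPi μ integrable_sq_mul_sub_one_poissonMeasure
  have hint_cube := integrable_prod_poissonPi μ integrable_pow_three_poissonMeasure
  simp_rw [hprod]
  rw [integral_add (by fun_prop) hint_cube, integral_sub (by fun_prop) (by fun_prop),
    integral_const_mul, integral_const_mul,
    integral_prod_poissonPi μ fun n ↦ (n.descFactorial 3 : ℝ),
    integral_prod_poissonPi μ fun n ↦ (n : ℝ) ^ 2 * (n - 1),
    integral_prod_poissonPi μ fun n ↦ (n : ℝ) ^ 3]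
  simp only [integral_descFactorial_poissonMeasure, integral_sq_mul_sub_one_poissonMeasure,
    integral_pow_three_poissonMeasure, prod_pow, prod_mul_distrib]
  ring

theorem expectation_eps3 (m : ℕ) (hm : 2 ≤ m) (μ : Fin m → ℝ≥0) (hμ : ∀ j, 0 < μ j) :
    ∫ x : Fin m → ℕ, ((1/2 : ℝ) * ∏ j, ((x j : ℝ) * ((x j : ℝ) - 1) * ((x j : ℝ) - 2)) - (3/2 : ℝ) * (∏ j, (x j : ℝ)) * (∏ j, ((x j : ℝ) * ((x j : ℝ) - 1))) + (∏ j, (x j : ℝ)) ^ 3) ∂(poissonPi μ)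
      = (1/2 : ℝ) * (∏ j, (μ j : ℝ)) ^ 3 - (3/2 : ℝ) * (∏ j, (μ j : ℝ)) ^ 2 * ∏ j, (2 + (μ j : ℝ)) + (∏ j, (μ j : ℝ)) * ∏ j, (1 + 3 * (μ j : ℝ) + (μ j : ℝ) ^ 2) :=
  expectation_eps3_general m μ
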